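/- arXiv:2006.04286 — 3 statements merged into one kernel-verified Lean document; each statement's English description precedes it below -/
import Mathlib

section
/- Let ‖·‖ be a nonarchimedean multiplicative absolute value on a field K of characteristic 0 with ‖2‖ < 1, and color points of K² as in Monsky's coloring (A if ‖φₓ‖ ≥ ‖φᵧ‖ and ‖φₓ‖ ≥ 1; else B if ‖φᵧ‖ ≥ 1; else C). If a triangle Δ in K² has one vertex of each color A, B, C, then ‖Area(Δ)‖ > 1. -/
/-- The signed area of the triangle with vertices `p₁, p₂, p₃` in `K × K`. -/
noncomputable def triArea {K : Type*} [Field K] (p₁ p₂ p₃ : K × K) : K :=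
  Matrix.det !![1, 1, 1; p₁.1, p₂.1, p₃.1; p₁.2, p₂.2, p₃.2] / 2

/-- Monsky's coloring of the plane `K × K` relative to an absolute value `v`:
color `0` (= A) if `v φₓ ≥ v φᵧ` and `v φₓ ≥ 1`; else color `1` (= B) if
`v φᵧ ≥ 1`; else color `2` (= C). -/
noncomputable def monskyColor {K : Type*} [Field K] (v : AbsoluteValue K ℝ)
    (φ : K × K) : Fin 3 :=
  if v φ.1 ≥ v φ.2 ∧ v φ.1 ≥ 1 then 0
  else if v φ.2 ≥ 1 then 1
  else 2

lemma ultra_add_eq {K : Type*} [Field K] (v : AbsoluteValue K ℝ)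
    (hna : ∀ a b : K, v (a + b) ≤ max (v a) (v b))
    {x y : K} (h : v y < v x) : v (x + y) = v x := by
  refine le_antisymm ((hna x y).trans (max_le le_rfl h.le)) ?_
  have h2 : v x ≤ max (v (x + y)) (v y) := by
    have := hna (x + y) (-y)
    rw [v.map_neg] at this
    simpa using this
  rcases max_cases (v (x + y)) (v y) with ⟨he, _⟩ | ⟨he, _⟩
  · rw [he] at h2; exact h2
  · rw [he] at h2; exact absurd (h2.trans_lt h |> lt_irrefl _) (fun _ => (h.trans_le h2).false)

/-- For a nonarchimedean absolute value with `‖2‖ < 1` on a field of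
characteristic zero, a triangle with one vertex of each color `A`, `B`, `C`
has area of absolute value greater than 1. -/
theorem stmt_7 {K : Type*} [Field K] [CharZero K] (v : AbsoluteValue K ℝ)
    (hna : ∀ a b : K, v (a + b) ≤ max (v a) (v b))
    (h2 : v 2 < 1)
    (P Q R : K × K)
    (hP : monskyColor v P = 0) (hQ : monskyColor v Q = 1)
    (hR : monskyColor v R = 2) :
    v (triArea P Q R) > 1 := by
  -- extract color conditions
  unfold monskyColor at hP hQ hR
  have c1 : v P.1 ≥ v P.2 ∧ v P.1 ≥ 1 := by
    by_contra h
    rw [if_neg h] at hP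
    split_ifs at hP <;> exact absurd hP (by decide)
  have hQn : ¬(v Q.1 ≥ v Q.2 ∧ v Q.1 ≥ 1) := by
    intro h; rw [if_pos h] at hQ; exact absurd hQ (by decide)
  have c3 : v Q.2 ≥ 1 := by
    by_contra h; rw [if_neg hQn, if_neg h] at hQ; exact absurd hQ (by decide)
  have hRn : ¬(v R.1 ≥ v R.2 ∧ v R.1 ≥ 1) := by
    intro h; rw [if_pos h] at hR; exact absurd hR (by decide)
  have c5 : ¬(v R.2 ≥ 1) := by
    intro h; rw [if_neg hRn, if_pos h] at hR; exact absurd hR (by decide)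
  obtain ⟨hab, ha1⟩ := c1
  push_neg at hQn hRn
  have c2 := hQn
  have c4 := hRn
  -- notation
  set a := v P.1; set b := v P.2; set c := v Q.1; set d := v Q.2
  set e := v R.1; set f := v R.2
  have hf1 : f < 1 := lt_of_not_ge c5
  have hcd : c < d := by
    by_contra h
    push_neg at h
    exact absurd c3 (not_le.mpr ((c2 h).trans_le' h |>.trans_le le_rfl)) 
  have he1 : e < 1 := by
    by_cases hef : e ≥ f
    · exact c4 hef
    · exact (lt_of_not_ge hef).trans hf1
  have had : (1:ℝ) ≤ a * d := by nlinarith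
  have hdet : v (Matrix.det !![1, 1, 1; P.1, Q.1, R.1; P.2, Q.2, R.2]) = a * d := by
    have hD : Matrix.det !![1, 1, 1; P.1, Q.1, R.1; P.2, Q.2, R.2]
        = P.1 * Q.2 + (Q.1 * R.2 + (- (R.1 * Q.2) + (- (P.1 * R.2) + (R.1 * P.2 + - (Q.1 * P.2))))) := by
      simp [Matrix.det_fin_three]; ring
    rw [hD, ultra_add_eq v hna, v.map_mul]
    -- show the tail has smaller abs value
    have hPQ : v (P.1 * Q.2) = a * d := v.map_mul _ _
    have ha0 : 0 < a := lt_of_lt_of_le one_pos ha1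
    have hd0 : 0 < d := lt_of_lt_of_le one_pos c3
    have t1 : v (Q.1 * R.2) < a * d := by
      rw [v.map_mul]
      calc c * f < d * 1 := by
            apply mul_lt_mul' hcd.le hf1 (v.nonneg _) hd0
        _ = d := mul_one d
        _ ≤ a * d := le_mul_of_one_le_left hd0.le ha1
    have t2 : v (-(R.1 * Q.2)) < a * d := by
      rw [v.map_neg, v.map_mul]
      calc e * d < 1 * d := by exact mul_lt_mul_of_pos_right he1 hd0
        _ = d := one_mul d
        _ ≤ a * d := le_mul_of_one_le_left hd0.le ha1
    have t3 : v (-(P.1 * R.2)) < a * d := by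
      rw [v.map_neg, v.map_mul]
      calc a * f < a * 1 := mul_lt_mul_of_pos_left hf1 ha0
        _ = a := mul_one a
        _ ≤ a * d := le_mul_of_one_le_right ha0.le c3
    have t4 : v (R.1 * P.2) < a * d := by
      rw [v.map_mul]
      calc e * b ≤ e * a := mul_le_mul_of_nonneg_left hab (v.nonneg _)
        _ < 1 * a := mul_lt_mul_of_pos_right he1 ha0
        _ = a := one_mul a
        _ ≤ a * d := le_mul_of_one_le_right ha0.le c3
    have t5 : v (-(Q.1 * P.2)) < a * d := by
      rw [v.map_neg, v.map_mul]
      rcases eq_or_lt_of_le (v.nonneg P.2) with hb0 | hb0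
      · rw [← hb0, mul_zero]; exact lt_of_lt_of_le one_pos had
      · calc c * b < d * b := mul_lt_mul_of_pos_right hcd hb0
          _ ≤ d * a := mul_le_mul_of_nonneg_left hab hd0.le
          _ = a * d := mul_comm d a
    rw [hPQ]
    calc v _ ≤ max (v (Q.1 * R.2)) (max (v (-(R.1 * Q.2))) (max (v (-(P.1 * R.2)))
          (max (v (R.1 * P.2)) (v (-(Q.1 * P.2)))))) := by
          refine (hna _ _).trans (max_le_max le_rfl ?_)
          refine (hna _ _).trans (max_le_max le_rfl ?_)
          refine (hna _ _).trans (max_le_max le_rfl ?_)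
          exact hna _ _
      _ < a * d := by
          exact max_lt t1 (max_lt t2 (max_lt t3 (max_lt t4 t5)))
  have h20 : 0 < v 2 := v.pos (by norm_num)
  unfold triArea
  rw [map_div₀, hdet]
  calc (1:ℝ) < 1 / v 2 := by rw [lt_div_iff₀ h20]; simpa using h2
    _ ≤ a * d / v 2 := by gcongr
end

section
/- Let p, f ∈ ℤ[A₁,...,Aₙ] with p irreducible over ℚ and primitive (the gcd of its coefficients is 1), let σ = A₁ + ⋯ + Aₙ, and suppose p divides 2f − σᵉ in ℤ[A₁,...,Aₙ]. Then the reduction of p modulo 2 equals σ^d mod 2, where d = deg p. -/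
/-!
Reducing modulo 2 kills `2 * f`, so the reduction `p̄` of `p` divides `σ ^ e`. Over `𝔽₂` the
linear form `σ` is prime (it becomes a variable after a triangular change of variables) and `1`
is the only unit, so `p̄ = σ ^ k` (with no variables at all, `p̄` is simply the constant `1`). Primitivity makes `p̄ ≠ 0`, and since `p̄` is homogeneous of
degree `d`, comparing degrees gives `k = d`.
-/

open MvPolynomial

namespace MvPolynomial

theorem prime_sum_X {R : Type*} [CommRing R] [IsDomain R] (m : ℕ) :
    Prime (∑ i : Fin (m + 1), X i : MvPolynomial (Fin (m + 1)) R) := by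
  rw [← MulEquiv.prime_iff (finSuccEquiv R m).toMulEquiv]
  have hσ : finSuccEquiv R m (∑ i, X i) = Polynomial.X - Polynomial.C (-∑ i : Fin m, X i) := by
    simp [Fin.sum_univ_succ, finSuccEquiv_X_zero, finSuccEquiv_X_succ, map_sum]
  exact hσ ▸ Polynomial.prime_X_sub_C _

theorem isHomogeneous_sum_X_pow {R : Type*} [CommSemiring R] {ι : Type*} [Fintype ι] (k : ℕ) :
    ((∑ i : ι, X i : MvPolynomial ι R) ^ k).IsHomogeneous k := by
  simpa using (IsHomogeneous.sum Finset.univ X 1 fun i _ => isHomogeneous_X R i).pow k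

theorem eq_one_of_isUnit_zmod_two {ι : Type*} {u : MvPolynomial ι (ZMod 2)} (hu : IsUnit u) :
    u = 1 := by
  obtain ⟨r, hr, rfl⟩ := isUnit_iff_eq_C_of_isReduced.mp hu
  rw [isUnit_iff_eq_one.mp hr, C_1]

theorem map_intCast_zmod_ne_zero {ι : Type*} {p : MvPolynomial ι ℤ} {ℓ : ℕ} (hℓ : ℓ ≠ 1)
    (hprim : ∀ c : ℤ, (∀ m, c ∣ p.coeff m) → IsUnit c) :
    map (Int.castRingHom (ZMod ℓ)) p ≠ 0 := by
  intro h
  have hdvd : ∀ m, (ℓ : ℤ) ∣ p.coeff m := fun m =>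
    (ZMod.intCast_zmod_eq_zero_iff_dvd _ ℓ).mp (by simpa [coeff_map] using congr_arg (coeff m) h)
  exact hℓ (by simpa using Int.isUnit_iff.mp (hprim ℓ hdvd))

theorem eq_sum_X_pow_of_dvd_sum_X_pow {n d e : ℕ} {q : MvPolynomial (Fin n) (ZMod 2)}
    (hq : q.IsHomogeneous d) (hq0 : q ≠ 0) (hdvd : q ∣ (∑ i, X i) ^ e) :
    q = (∑ i, X i) ^ d := by
  cases n with
  | zero =>
    have hq1 : q = 1 := by
      rw [eq_C_of_isEmpty q] at hq0 ⊢
      obtain hc | hc : q.coeff 0 = 0 ∨ q.coeff 0 = 1 := by generalize q.coeff 0 = c; decide +revert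
      · simp [hc] at hq0
      · rw [hc, C_1]
    have hd : d = 0 := hq.inj_right (hq1 ▸ isHomogeneous_one _ _) hq0
    simp [hq1, hd]
  | succ m =>
    obtain ⟨k, -, u, hu⟩ := (dvd_prime_pow (prime_sum_X m) e).mp hdvd
    rw [eq_one_of_isUnit_zmod_two u.isUnit, mul_one] at hu
    rwa [hq.inj_right (hu ▸ isHomogeneous_sum_X_pow k) hq0]

end MvPolynomial

theorem stmt_8_general {n : ℕ} (p f : MvPolynomial (Fin n) ℤ) (d e : ℕ)
    (hp : p.IsHomogeneous d)
    (hprim : ∀ c : ℤ, (∀ m, c ∣ MvPolynomial.coeff m p) → IsUnit c)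
    (hdvd : p ∣ (2 * f - (∑ i : Fin n, X i) ^ e)) :
    MvPolynomial.map (Int.castRingHom (ZMod 2)) p
      = (∑ i : Fin n, X i) ^ d := by
  refine eq_sum_X_pow_of_dvd_sum_X_pow (e := e) (hp.map _)
    (map_intCast_zmod_ne_zero (by decide) hprim) ?_
  simpa [CharTwo.two_eq_zero] using map_dvd (map (Int.castRingHom (ZMod 2))) hdvd

/-- Mod 2 theorem: if `p` is homogeneous of degree `d`, irreducible over `ℚ`,
primitive over `ℤ`, and divides `2f - σᵉ` where `σ` is the sum of the
variables, then `p ≡ σ^d (mod 2)`. -/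
theorem stmt_8 {n : ℕ} (p f : MvPolynomial (Fin n) ℤ) (d e : ℕ)
    (hp : p.IsHomogeneous d)
    (hirr : Irreducible (MvPolynomial.map (Int.castRingHom ℚ) p))
    (hprim : ∀ c : ℤ, (∀ m, c ∣ MvPolynomial.coeff m p) → IsUnit c)
    (hdvd : p ∣ (2 * f - (∑ i : Fin n, X i) ^ e)) :
    MvPolynomial.map (Int.castRingHom (ZMod 2)) p
      = (∑ i : Fin n, X i) ^ d :=
  stmt_8_general p f d e hp hprim hdvd
end

section
/- Let x, y be indeterminates, Z_A = y/2, Z_B = (1−x)/2, Z_C = (1−y)/2, Z_D = x/2 in ℚ(x,y), and let σ = A+B+C+D. A polynomial f₀ ∈ ℤ[A,B,C,D] of degree 1 satisfies 2·f₀(Z_A,Z_B,Z_C,Z_D) = Z_A+Z_B+Z_C+Z_D if and only if f₀ = (B+D) + m·(A−B+C−D) for some integer m. -/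
/-!
A degree-1 form is `∑ aᵢ Xᵢ`, and `2 f₀(Z) - ∑ Zᵢ = (a₃ - a₁) x + (a₀ - a₂) y + (a₁ + a₂ - 1)`.
Since `1, x, y` are linearly independent, the condition is `a₂ = a₀`, `a₃ = a₁`, `a₀ + a₁ = 1`,
i.e. `a = (m, 1 - m, m, 1 - m)` for `m = a₀`, which is the coefficient vector of `f + m p`.
-/

open MvPolynomial

namespace MvPolynomial

variable {σ R : Type*} [CommSemiring R] [Fintype σ]

theorem exists_eq_sum_smul_X_of_isHomogeneous_one {f : MvPolynomial σ R}
    (hf : f.IsHomogeneous 1) : ∃ a : σ → R, f = ∑ i, a i • X i := by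
  have hf' : f ∈ Submodule.span R (Set.range X) := by
    rw [← homogeneousSubmodule_one_eq_span_X]
    exact hf
  obtain ⟨a, ha⟩ := (Submodule.mem_span_range_iff_exists_fun R).mp hf'
  exact ⟨a, ha.symm⟩

theorem sum_smul_X_injective :
    Function.Injective fun a : σ → R => ∑ i, a i • (X i : MvPolynomial σ R) := by
  intro a b hab
  exact (linearIndependent_X σ R).fintypeLinearCombination_injective
    (by simpa only [Fintype.linearCombination_apply] using hab)

end MvPolynomial

theorem intCast_mul_algebraMap_X_add_intCast_eq_zero_iff {R A : Type*} [CommRing R] [CharZero R]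
    [CommRing A] [Algebra (MvPolynomial (Fin 2) R) A]
    (hinj : Function.Injective (algebraMap (MvPolynomial (Fin 2) R) A)) (p q r : ℤ) :
    (p : A) * algebraMap (MvPolynomial (Fin 2) R) A (X 0)
        + q * algebraMap (MvPolynomial (Fin 2) R) A (X 1) + r = 0 ↔
      p = 0 ∧ q = 0 ∧ r = 0 := by
  refine ⟨fun h => ?_, by rintro ⟨rfl, rfl, rfl⟩; simp⟩
  have hpoly : (p : MvPolynomial (Fin 2) R) * X 0 + (q : MvPolynomial (Fin 2) R) * X 1
      + (r : MvPolynomial (Fin 2) R) = 0 :=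
    hinj (by simpa using h)
  have h00 : (r : R) = 0 := by simpa using congrArg (eval ![0, 0]) hpoly
  have h10 : (p : R) + r = 0 := by simpa using congrArg (eval ![1, 0]) hpoly
  have h01 : (q : R) + r = 0 := by simpa using congrArg (eval ![0, 1]) hpoly
  norm_cast at h00 h10 h01
  omega

/-- For the dissection of Example 1 (interior vertex `(x,y)` joined to the four
corners of the unit square), a homogeneous degree-1 integer polynomial `f₀` in
the variables `A, B, C, D` satisfies `2·f₀(Z_A,Z_B,Z_C,Z_D) = Z_A+Z_B+Z_C+Z_D`
identically in `ℚ(x,y)` if and only if `f₀ = (B + D) + m·(A - B + C - D)` for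
some integer `m`. -/
theorem stmt_15 (f₀ : MvPolynomial (Fin 4) ℤ) (hf₀ : f₀.IsHomogeneous 1) :
    (let K := FractionRing (MvPolynomial (Fin 2) ℚ)
     let x : K := algebraMap (MvPolynomial (Fin 2) ℚ) K (MvPolynomial.X 0)
     let y : K := algebraMap (MvPolynomial (Fin 2) ℚ) K (MvPolynomial.X 1)
     let Z : Fin 4 → K := ![y / 2, (1 - x) / 2, (1 - y) / 2, x / 2]
     2 * MvPolynomial.aeval Z f₀ = Z 0 + Z 1 + Z 2 + Z 3) ↔
    ∃ m : ℤ, f₀ = (X 1 + X 3) + C m * (X 0 - X 1 + X 2 - X 3) := by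
  obtain ⟨a, rfl⟩ := exists_eq_sum_smul_X_of_isHomogeneous_one hf₀
  have hmonsky (m : ℤ) : X 1 + X 3 + C m * (X 0 - X 1 + X 2 - X 3) =
      ∑ i, ![m, 1 - m, m, 1 - m] i • (X i : MvPolynomial (Fin 4) ℤ) := by
    simp only [Fin.sum_univ_four, smul_eq_C_mul, Matrix.cons_val_zero, Matrix.cons_val_one,
      Matrix.cons_val_two, Matrix.cons_val_three, Matrix.head_cons, Matrix.tail_cons, map_sub,
      map_one]
    ring
  simp_rw [hmonsky, sum_smul_X_injective.eq_iff]
  simp only [map_sum, map_zsmul, aeval_X]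
  simp only [Fin.sum_univ_four, Matrix.cons_val_zero, Matrix.cons_val_one, Matrix.cons_val_two,
    Matrix.cons_val_three, Matrix.head_cons, Matrix.tail_cons]
  refine (?_ : _ ↔ _).trans ((intCast_mul_algebraMap_X_add_intCast_eq_zero_iff
    (IsFractionRing.injective (MvPolynomial (Fin 2) ℚ) (FractionRing (MvPolynomial (Fin 2) ℚ)))
    (a 3 - a 1) (a 0 - a 2) (a 1 + a 2 - 1)).trans ?_)
  · constructor <;> intro h <;> push_cast [zsmul_eq_mul] at h ⊢ <;> linear_combination h
  · constructor
    · rintro ⟨h1, h2, h3⟩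
      exact ⟨a 0, funext fun i => by fin_cases i <;> simp <;> omega⟩
    · rintro ⟨m, rfl⟩
      simp
end
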